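/- arXiv:2510.04411 — 3 statements merged into one kernel-verified Lean document; each statement's English description precedes it below -/
import Mathlib

section
/- Let c be a nonzero complex number and let U be any 6×6 unitary matrix (rows and columns indexed 0, …, 5) whose entries satisfy U₀₀ = c, U₀₁ = 0, U₁₀ = 0, U₁₁ = 2c, U₂₀ = c, U₂₁ = 2c, U₃₀ = 0, U₃₁ = 3c. Then there do NOT exist 2×2 unitary matrices S₁, S₂, S₃, T₁, T₂, T₃ and 2×2 diagonal complex matrices Σ_{ij} for i, j ∈ {1, 2, 3} such that diag(S₁, S₂, S₃) · U · diag(T₁, T₂, T₃) equals the 6×6 matrix whose (i, j)-th 2×2 block is Σ_{ij}. -/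
open Matrix

/-- The 6×6 block-diagonal matrix `diag(A₁, A₂, A₃)` with 2×2 blocks. -/
noncomputable def bd3 (S : Fin 3 → Matrix (Fin 2) (Fin 2) ℂ) : Matrix (Fin 6) (Fin 6) ℂ :=
  Matrix.of fun i j =>
    if i.val / 2 = j.val / 2 then
      S ⟨i.val / 2, by have := i.isLt; omega⟩ ⟨i.val % 2, by omega⟩ ⟨j.val % 2, by omega⟩
    else 0

/-- The 6×6 matrix whose `(i,j)`-th 2×2 block is `Sg i j`. -/
noncomputable def blocks3 (Sg : Fin 3 → Fin 3 → Matrix (Fin 2) (Fin 2) ℂ) :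
    Matrix (Fin 6) (Fin 6) ℂ :=
  Matrix.of fun i j =>
    (Sg ⟨i.val / 2, by have := i.isLt; omega⟩ ⟨j.val / 2, by have := j.isLt; omega⟩)
      ⟨i.val % 2, by omega⟩ ⟨j.val % 2, by omega⟩

/-- **no 3×3-block cosine–sine decomposition.** For any `c ≠ 0` and any
6×6 unitary `U` with the indicated entries, there are no 2×2 unitaries `S₁,S₂,S₃,
T₁,T₂,T₃` and 2×2 diagonal matrices `Σ_{ij}` with
`diag(S₁,S₂,S₃) · U · diag(T₁,T₂,T₃)` equal to the block matrix of the `Σ_{ij}`. -/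
theorem no_three_block_cs (c : ℂ) (hc : c ≠ 0) (U : Matrix (Fin 6) (Fin 6) ℂ)
    (hU : U ∈ Matrix.unitaryGroup (Fin 6) ℂ)
    (h00 : U 0 0 = c) (h01 : U 0 1 = 0)
    (h10 : U 1 0 = 0) (h11 : U 1 1 = 2 * c)
    (h20 : U 2 0 = c) (h21 : U 2 1 = 2 * c)
    (h30 : U 3 0 = 0) (h31 : U 3 1 = 3 * c) :
    ¬ ∃ (S T : Fin 3 → Matrix (Fin 2) (Fin 2) ℂ)
        (Sg : Fin 3 → Fin 3 → Matrix (Fin 2) (Fin 2) ℂ),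
        (∀ i, S i ∈ Matrix.unitaryGroup (Fin 2) ℂ) ∧
        (∀ i, T i ∈ Matrix.unitaryGroup (Fin 2) ℂ) ∧
        (∀ i j, (Sg i j) 0 1 = 0 ∧ (Sg i j) 1 0 = 0) ∧
        bd3 S * U * bd3 T = blocks3 Sg := by
  rintro ⟨S, T, Sg, hS, hT, hSg, hEq⟩
  have e1 := congrFun (congrFun hEq 0) 1
  have e2 := congrFun (congrFun hEq 1) 0
  have e3 := congrFun (congrFun hEq 2) 1
  have e4 := congrFun (congrFun hEq 3) 0
  simp (config := { decide := true }) [bd3, blocks3, Matrix.mul_apply, Fin.sum_univ_six,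
    h00, h01, h10, h11, h20, h21, h30, h31,
    show ((3:Fin 6):ℕ)/2 = 1 from rfl, show ((3:Fin 6):ℕ)%2 = 1 from rfl, Fin.mk_one,
    (hSg 0 0).1, (hSg 0 0).2, (hSg 1 0).1, (hSg 1 0).2] at e1 e2 e3 e4
  have hA := Matrix.mem_unitaryGroup_iff'.mp (hS 0)
  have hB := Matrix.mem_unitaryGroup_iff'.mp (hS 1)
  have hC := Matrix.mem_unitaryGroup_iff'.mp (hT 0)
  have a1 := congrFun (congrFun hA 0) 0
  have a2 := congrFun (congrFun hA 0) 1
  have a3 := congrFun (congrFun hA 1) 0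
  have a4 := congrFun (congrFun hA 1) 1
  have b1 := congrFun (congrFun hB 0) 0
  have b2 := congrFun (congrFun hB 0) 1
  have b3 := congrFun (congrFun hB 1) 0
  have b4 := congrFun (congrFun hB 1) 1
  have t1 := congrFun (congrFun hC 0) 0
  have t2 := congrFun (congrFun hC 0) 1
  have t4 := congrFun (congrFun hC 1) 1
  simp [Matrix.mul_apply, Fin.sum_univ_two, Matrix.one_apply] at a1 a2 a3 a4 b1 b2 b3 b4 t1 t2 t4
  set K := starRingEnd ℂ with hK
  -- conjugated versions of e2 and e4
  have e2' := congrArg K e2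
  have e4' := congrArg K e4
  simp only [_root_.map_add, _root_.map_mul, map_zero, map_ofNat] at e2' e4'
  -- R1 : |c|^2 (t̄00 t01 + 4 t̄10 t11) = 0
  have R1 : K c * c * (K (T 0 0 0) * T 0 0 1 + 4 * (K (T 0 1 0) * T 0 1 1)) = 0 := by
    linear_combination
      (K (S 0 0 0) * K c * K (T 0 0 0) + 2 * K c * K (S 0 0 1) * K (T 0 1 0)) * e1
      + (S 0 1 0 * c * T 0 0 1 + S 0 1 1 * (2*c) * T 0 1 1) * e2'
      - K c * c * (K (T 0 0 0) * T 0 0 1) * a1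
      - 2 * (K c * c) * (K (T 0 0 0) * T 0 1 1) * a2
      - 2 * (K c * c) * (K (T 0 1 0) * T 0 0 1) * a3
      - 4 * (K c * c) * (K (T 0 1 0) * T 0 1 1) * a4
  -- R2 : |c|^2 (t̄00 t01 + 2 t̄00 t11 + 2 t̄10 t01 + 13 t̄10 t11) = 0
  have R2 : K c * c * (K (T 0 0 0) * T 0 0 1 + 2 * (K (T 0 0 0) * T 0 1 1)
      + 2 * (K (T 0 1 0) * T 0 0 1) + 13 * (K (T 0 1 0) * T 0 1 1)) = 0 := by
    linear_combination
      (K (S 1 0 0) * (K c * K (T 0 0 0) + 2 * K c * K (T 0 1 0))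
        + K (S 1 0 1) * (3 * K c * K (T 0 1 0))) * e3
      + (S 1 1 0 * c * T 0 0 1 + (S 1 1 0 * (2*c) + S 1 1 1 * (3*c)) * T 0 1 1) * e4'
      - ((K c * K (T 0 0 0) + 2 * K c * K (T 0 1 0)) * (c * T 0 0 1 + 2*c * T 0 1 1)) * b1
      - ((K c * K (T 0 0 0) + 2 * K c * K (T 0 1 0)) * (3*c * T 0 1 1)) * b2
      - ((3 * K c * K (T 0 1 0)) * (c * T 0 0 1 + 2*c * T 0 1 1)) * b3
      - ((3 * K c * K (T 0 1 0)) * (3*c * T 0 1 1)) * b4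
  have hcs : K c ≠ 0 := by
    rw [hK, starRingEnd_apply]; exact star_ne_zero.mpr hc
  have hcc : K c * c ≠ 0 := mul_ne_zero hcs hc
  -- t̄10 * t11 = 0
  have key : K (T 0 1 0) * T 0 1 1 = 0 := by
    have h8 : (K c * c * 3) * (K (T 0 1 0) * T 0 1 1) = 0 := by
      linear_combination R1 - (K c * c) * t2
    exact (mul_eq_zero.mp h8).resolve_left (mul_ne_zero hcc three_ne_zero)
  rcases mul_eq_zero.mp key with h | h
  · -- t10 = 0
    rw [hK, starRingEnd_apply, star_eq_zero] at h
    have ht00 : T 0 0 0 ≠ 0 := by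
      intro h0
      rw [h0, h] at t1; simp at t1
    have ht00' : K (T 0 0 0) ≠ 0 := by
      rw [hK, starRingEnd_apply]; exact star_ne_zero.mpr ht00
    rw [h] at t2; simp at t2
    have ht01 : T 0 0 1 = 0 := t2.resolve_left ht00
    rw [h, ht01] at R2
    simp only [map_zero, mul_zero, zero_mul, add_zero, zero_add] at R2
    have h9 : (K c * c * 2 * K (T 0 0 0)) * T 0 1 1 = 0 := by linear_combination R2
    have ht11 : T 0 1 1 = 0 :=
      (mul_eq_zero.mp h9).resolve_left (mul_ne_zero (mul_ne_zero hcc two_ne_zero) ht00')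
    rw [ht01, ht11] at t4; simp at t4
  · -- t11 = 0
    have ht01 : T 0 0 1 ≠ 0 := by
      intro h0
      rw [h0, h] at t4; simp at t4
    rw [h] at t2; simp at t2
    have ht00 : T 0 0 0 = 0 := t2.resolve_right ht01
    rw [h, ht00] at R2
    simp only [map_zero, mul_zero, zero_mul, add_zero, zero_add] at R2
    have h9 : (K c * c * 2 * T 0 0 1) * K (T 0 1 0) = 0 := by linear_combination R2
    have ht10' : K (T 0 1 0) = 0 :=
      (mul_eq_zero.mp h9).resolve_left (mul_ne_zero (mul_ne_zero hcc two_ne_zero) ht01)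
    rw [hK, starRingEnd_apply, star_eq_zero] at ht10'
    rw [ht00, ht10'] at t1; simp at t1
end

section
/- Let a, b ≥ 1, let U be a 2^a×2^a unitary and V a 2^b×2^b unitary with given CS decompositions (S₀^U, S₁^U, Σ₁^U, Σ₂^U, T₀^U, T₁^U) and (S₀^V, S₁^V, Σ₁^V, Σ₂^V, T₀^V, T₁^V). Define Σ^U := [[Σ₁^U, Σ₂^U], [−Σ₂^U, Σ₁^U]] and Σ^V := [[Σ₁^V, Σ₂^V], [−Σ₂^V, Σ₁^V]] (which are unitary). Let W = Γ† (I_{2^a} ⊗ V) Γ with Γ = U ⊗ |1⟩⟨1| ⊗ I_{2^{b−1}} + I_{2^a} ⊗ |0⟩⟨0| ⊗ I_{2^{b−1}}, and let W^Σ = Γ_Σ† (I_{2^a} ⊗ Σ^V) Γ_Σ with Γ_Σ = Σ^U ⊗ |1⟩⟨1| ⊗ I_{2^{b−1}} + I_{2^a} ⊗ |0⟩⟨0| ⊗ I_{2^{b−1}}. Then W = A · W^Σ · B, where, writing S^U_blk := |0⟩⟨0| ⊗ S₀^U + |1⟩⟨1| ⊗ S₁^U and T^U_blk := |0⟩⟨0|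 ⊗ T₀^U + |1⟩⟨1| ⊗ T₁^U, one sets A := S^U_blk ⊗ |0⟩⟨0| ⊗ S₀^V + (T^U_blk)† ⊗ |1⟩⟨1| ⊗ S₁^V and B := (S^U_blk)† ⊗ |0⟩⟨0| ⊗ T₀^V + T^U_blk ⊗ |1⟩⟨1| ⊗ T₁^V. -/
open Matrix

/-- Matrices on `n` qubits, indexed by bit strings (qubit 0 = first/most significant
tensor factor). -/
abbrev QMat (n : ℕ) : Type := Matrix (Fin n → Fin 2) (Fin n → Fin 2) ℂ

/-- The unitary group on `n` qubits. -/
abbrev UG (n : ℕ) := Matrix.unitaryGroup (Fin n → Fin 2) ℂ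

/-- The fixed 2×2 unitary `Φ = (1/√2)·[[1, i], [i, 1]]`. -/
noncomputable def Phi : Matrix (Fin 2) (Fin 2) ℂ :=
  ((Real.sqrt 2 : ℂ))⁻¹ • !![1, Complex.I; Complex.I, 1]

/-- `|0⟩⟨0| ⊗ A + |1⟩⟨1| ⊗ B` (block diagonal with respect to the first qubit). -/
noncomputable def ctrlOn {n : ℕ} (A B : QMat n) : QMat (n+1) :=
  Matrix.of fun x y =>
    if x 0 = y 0 then
      (if x 0 = 0 then A (Fin.tail x) (Fin.tail y) else B (Fin.tail x) (Fin.tail y))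
    else 0

/-- `I₂ ⊗ A`. -/
noncomputable def idTensor {n : ℕ} (A : QMat n) : QMat (n+1) :=
  Matrix.of fun x y => if x 0 = y 0 then A (Fin.tail x) (Fin.tail y) else 0

/-- `B ⊗ I_{2^n}` for a one-qubit gate `B` (acting on the first qubit). -/
noncomputable def firstG {n : ℕ} (B : Matrix (Fin 2) (Fin 2) ℂ) : QMat (n+1) :=
  Matrix.of fun x y => B (x 0) (y 0) * (if Fin.tail x = Fin.tail y then 1 else 0)

/-- `I_{2^n} ⊗ B` for a one-qubit gate `B` (acting on the last qubit). -/
noncomputable def lastG {n : ℕ} (B : Matrix (Fin 2) (Fin 2) ℂ) : QMat (n+1) :=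
  Matrix.of fun x y =>
    B (x (Fin.last n)) (y (Fin.last n)) * (if Fin.init x = Fin.init y then 1 else 0)

/-- The multiplexer `R̃ = Σ_{a,b∈{0,1}} |a⟩⟨a| ⊗ R_{ab} ⊗ |b⟩⟨b|`, doubly controlled
on the first and the last qubit. -/
noncomputable def mux2 {r : ℕ} (R : Fin 2 → Fin 2 → QMat r) : QMat (r+2) :=
  Matrix.of fun x y =>
    if x 0 = y 0 ∧ x (Fin.last (r+1)) = y (Fin.last (r+1)) then
      R (x 0) (x (Fin.last (r+1)))
        (fun i => x i.succ.castSucc) (fun i => y i.succ.castSucc)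
    else 0

/-- The cosine–sine middle factor `[[Σ₁, Σ₂], [−Σ₂, Σ₁]]` built from the diagonal
entries `σ1`, `σ2` of the stubs. -/
noncomputable def csmat {n : ℕ} (σ1 σ2 : (Fin n → Fin 2) → ℝ) : QMat (n+1) :=
  Matrix.of fun x y =>
    if Fin.tail x = Fin.tail y then
      (if x 0 = 0 then
         (if y 0 = 0 then (σ1 (Fin.tail x) : ℂ) else (σ2 (Fin.tail x) : ℂ))
       else
         (if y 0 = 0 then -(σ2 (Fin.tail x) : ℂ) else (σ1 (Fin.tail x) : ℂ)))
    else 0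

/-- A CS decomposition of a `2N×2N` unitary `W` (blocks w.r.t. the first qubit):
unitaries `S₀,S₁,T₀,T₁` and nonnegative diagonal stubs `Σ₁,Σ₂` (given by their diagonal
entries `σ1, σ2`) with `Σ₁² + Σ₂² = I` and
`W = [[S₀,0],[0,S₁]]·[[Σ₁,Σ₂],[−Σ₂,Σ₁]]·[[T₀,0],[0,T₁]]`. -/
def IsCSD {n : ℕ} (W : QMat (n+1)) (S0 S1 T0 T1 : QMat n)
    (σ1 σ2 : (Fin n → Fin 2) → ℝ) : Prop :=
  S0 ∈ UG n ∧ S1 ∈ UG n ∧ T0 ∈ UG n ∧ T1 ∈ UG n ∧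
  (∀ x, 0 ≤ σ1 x) ∧ (∀ x, 0 ≤ σ2 x) ∧ (∀ x, σ1 x ^ 2 + σ2 x ^ 2 = 1) ∧
  W = ctrlOn S0 S1 * csmat σ1 σ2 * ctrlOn T0 T1

/-- `Γ = U ⊗ |1⟩⟨1| ⊗ I_{2^n} + I ⊗ |0⟩⟨0| ⊗ I_{2^n}`: the unitary `U` on the first `a`
qubits, controlled by the next qubit. -/
noncomputable def gammaCtrl {a n : ℕ} (U : QMat a) : QMat (a + (n + 1)) :=
  Matrix.of fun x y =>
    (if ∀ i : Fin n, x (Fin.natAdd a i.succ) = y (Fin.natAdd a i.succ) then 1 else 0) *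
    (if x (Fin.natAdd a 0) = y (Fin.natAdd a 0) then
       (if x (Fin.natAdd a 0) = 1 then
          U (fun i => x (Fin.castAdd (n+1) i)) (fun i => y (Fin.castAdd (n+1) i))
        else if ∀ i : Fin a, x (Fin.castAdd (n+1) i) = y (Fin.castAdd (n+1) i) then 1
        else 0)
     else 0)

/-- `I_{2^m} ⊗ A` as an `(m + n)`-qubit operator, for `A` on `n` qubits. -/
noncomputable def idLeft {m n : ℕ} (A : QMat n) : QMat (m + n) :=
  Matrix.of fun x y =>
    (if ∀ i : Fin m, x (Fin.castAdd n i) = y (Fin.castAdd n i) then 1 else 0) *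
    A (fun i => x (Fin.natAdd m i)) (fun i => y (Fin.natAdd m i))

/-- One step of the valley construction: `W = Γ† (I ⊗ V) Γ` where
`Γ = U ⊗ |1⟩⟨1| ⊗ I + I ⊗ |0⟩⟨0| ⊗ I`. -/
noncomputable def valleyStep {a n : ℕ} (U : QMat (a+1)) (V : QMat (n+1)) :
    QMat ((a+1) + (n+1)) :=
  (gammaCtrl (a := a+1) (n := n) U)ᴴ * idLeft (m := a+1) V * gammaCtrl (a := a+1) (n := n) U

/-- The first `a+1` bits of an `(a+1)+(b+1)`-bit string (the `U` register). -/
def fuPart {a b : ℕ} (z : Fin ((a+1)+(b+1)) → Fin 2) (i : Fin (a+1)) : Fin 2 :=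
  z ⟨i.val, by have := i.isLt; omega⟩

/-- The middle bit (the first qubit of the `V` register). -/
def fcBit {a b : ℕ} (z : Fin ((a+1)+(b+1)) → Fin 2) : Fin 2 :=
  z ⟨a + 1, by omega⟩

/-- The last `b` bits (the rest of the `V` register). -/
def fvPart {a b : ℕ} (z : Fin ((a+1)+(b+1)) → Fin 2) (i : Fin b) : Fin 2 :=
  z ⟨a + 2 + i.val, by have := i.isLt; omega⟩

/-- `A := S^U_blk ⊗ |0⟩⟨0| ⊗ S₀^V + (T^U_blk)† ⊗ |1⟩⟨1| ⊗ S₁^V`. -/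
noncomputable def Amat {a b : ℕ} (S0U S1U T0U T1U : QMat a) (S0V S1V : QMat b) :
    QMat ((a+1)+(b+1)) :=
  Matrix.of fun z w =>
    (if fcBit z = 0 ∧ fcBit w = 0 then
        ctrlOn S0U S1U (fuPart z) (fuPart w) * S0V (fvPart z) (fvPart w) else 0) +
    (if fcBit z = 1 ∧ fcBit w = 1 then
        (ctrlOn T0U T1U)ᴴ (fuPart z) (fuPart w) * S1V (fvPart z) (fvPart w) else 0)

/-- `B := (S^U_blk)† ⊗ |0⟩⟨0| ⊗ T₀^V + T^U_blk ⊗ |1⟩⟨1| ⊗ T₁^V`. -/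
noncomputable def Bmat {a b : ℕ} (S0U S1U T0U T1U : QMat a) (T0V T1V : QMat b) :
    QMat ((a+1)+(b+1)) :=
  Matrix.of fun z w =>
    (if fcBit z = 0 ∧ fcBit w = 0 then
        (ctrlOn S0U S1U)ᴴ (fuPart z) (fuPart w) * T0V (fvPart z) (fvPart w) else 0) +
    (if fcBit z = 1 ∧ fcBit w = 1 then
        ctrlOn T0U T1U (fuPart z) (fuPart w) * T1V (fvPart z) (fvPart w) else 0)

namespace Valley17

abbrev M2 := Matrix (Fin 2) (Fin 2) ℂ

def Em (i j : Fin 2) : M2 := Matrix.of fun k l => if k = i ∧ l = j then 1 else 0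

lemma Em_mul (i j k l : Fin 2) : Em i j * Em k l = if j = k then Em i l else 0 := by
  ext p q
  fin_cases i <;> fin_cases j <;> fin_cases k <;> fin_cases l <;> fin_cases p <;> fin_cases q <;>
    simp [Em, Matrix.mul_apply, Fin.sum_univ_two]

lemma Em_conj (i j : Fin 2) : (Em i j)ᴴ = Em j i := by
  ext p q
  simp [Em, Matrix.conjTranspose_apply, apply_ite (star : ℂ → ℂ), and_comm]

noncomputable def btens {n : ℕ} (C : M2) (Q : QMat n) : QMat (n+1) :=
  Matrix.of fun x y => C (x 0) (y 0) * Q (Fin.tail x) (Fin.tail y)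

lemma btens_mul {n : ℕ} (C C' : M2) (Q Q' : QMat n) :
    btens C Q * btens C' Q' = btens (C * C') (Q * Q') := by
  ext x y
  simp only [Matrix.mul_apply, btens, Matrix.of_apply]
  rw [← Equiv.sum_comp (Fin.consEquiv fun _ : Fin (n+1) => Fin 2)
    (fun j => (C (x 0) (j 0) * Q (Fin.tail x) (Fin.tail j)) *
      (C' (j 0) (y 0) * Q' (Fin.tail j) (Fin.tail y)))]
  simp only [Fin.consEquiv, Equiv.coe_fn_mk, Fin.cons_zero, Fin.tail_cons]
  rw [Fintype.sum_prod_type, Finset.sum_mul_sum]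
  refine Finset.sum_congr rfl fun c _ => Finset.sum_congr rfl fun t _ => by ring

lemma btens_conj {n : ℕ} (C : M2) (Q : QMat n) : (btens C Q)ᴴ = btens Cᴴ Qᴴ := by
  ext x y
  simp [btens, Matrix.conjTranspose_apply, mul_comm]

lemma btens_zero {n : ℕ} (Q : QMat n) : btens 0 Q = 0 := by
  ext x y; simp [btens]

lemma two (c : Fin 2) : c = 0 ∨ c = 1 := by omega

lemma ctrlOn_eq {n : ℕ} (A B : QMat n) :
    ctrlOn A B = btens (Em 0 0) A + btens (Em 1 1) B := by
  ext x y
  rcases two (x 0) with h | h <;> rcases two (y 0) with h' | h' <;>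
    simp [ctrlOn, btens, Em, Matrix.add_apply, h, h']

lemma one_eq {n : ℕ} : (1 : QMat (n+1)) = btens (Em 0 0) 1 + btens (Em 1 1) 1 := by
  ext x y
  have hsplit : x = y ↔ x 0 = y 0 ∧ Fin.tail x = Fin.tail y := by
    constructor
    · rintro rfl; exact ⟨rfl, rfl⟩
    · rintro ⟨h0, ht⟩
      funext i
      induction i using Fin.cases with
      | zero => exact h0
      | succ i => exact congrFun ht i
  rcases two (x 0) with h | h <;> rcases two (y 0) with h' | h' <;>
    simp [Matrix.one_apply, btens, Em, Matrix.add_apply, h, h', hsplit]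

lemma csmat_eq {n : ℕ} (σ1 σ2 : (Fin n → Fin 2) → ℝ) :
    csmat σ1 σ2 = btens (Em 0 0) (Matrix.diagonal fun t => (σ1 t : ℂ))
      + btens (Em 0 1) (Matrix.diagonal fun t => (σ2 t : ℂ))
      + btens (Em 1 0) (Matrix.diagonal fun t => -(σ2 t : ℂ))
      + btens (Em 1 1) (Matrix.diagonal fun t => (σ1 t : ℂ)) := by
  ext x y
  rcases two (x 0) with h | h <;> rcases two (y 0) with h' | h' <;>
    by_cases ht : Fin.tail x = Fin.tail y <;>
    simp [csmat, btens, Em, Matrix.add_apply, Matrix.diagonal_apply, h, h', ht]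


section Tens

variable {a b : ℕ}

lemma zcongr {m : ℕ} (z : Fin m → Fin 2) {i j : Fin m} (h : i.val = j.val) : z i = z j := by
  congr 1; exact Fin.ext h

noncomputable def tens (C : M2) (P : QMat (a+1)) (Q : QMat b) : QMat ((a+1)+(b+1)) :=
  Matrix.of fun z w =>
    C (fcBit z) (fcBit w) * P (fuPart z) (fuPart w) * Q (fvPart z) (fvPart w)

def splitIdx : (Fin ((a+1)+(b+1)) → Fin 2) ≃
    Fin 2 × (Fin (a+1) → Fin 2) × (Fin b → Fin 2) where
  toFun z := (fcBit z, fuPart z, fvPart z)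
  invFun w := fun i =>
    if h : i.val < a+1 then w.2.1 ⟨i.val, h⟩
    else if h2 : i.val < a+2 then w.1
    else w.2.2 ⟨i.val - (a+2), by omega⟩
  left_inv z := by
    funext i
    dsimp only
    split_ifs with h h2
    · rfl
    · exact zcongr z (by simp [fcBit]; omega)
    · exact zcongr z (by simp [fvPart]; omega)
  right_inv w := by
    refine Prod.ext ?_ (Prod.ext ?_ ?_)
    · show (if h : (a+1 : ℕ) < a+1 then _ else if h2 : (a+1 : ℕ) < a+2 then _ else _) = _
      rw [dif_neg (by omega), dif_pos (by omega)]
    · funext i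
      show (if h : (i : ℕ) < a+1 then w.2.1 ⟨i.val, h⟩ else _) = _
      rw [dif_pos i.isLt]
    · funext i
      show (if h : (a+2+(i:ℕ)) < a+1 then _ else if h2 : (a+2+(i:ℕ)) < a+2 then _
            else w.2.2 ⟨a+2+(i:ℕ) - (a+2), _⟩) = _
      rw [dif_neg (by omega), dif_neg (by omega)]
      congr 1
      exact Fin.ext (by simp)

@[simp] lemma fcBit_splitIdx (w : Fin 2 × (Fin (a+1) → Fin 2) × (Fin b → Fin 2)) :
    fcBit (splitIdx.symm w) = w.1 := congrArg Prod.fst (splitIdx.right_inv w)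

@[simp] lemma fuPart_splitIdx (w : Fin 2 × (Fin (a+1) → Fin 2) × (Fin b → Fin 2)) :
    fuPart (splitIdx.symm w) = w.2.1 :=
  congrArg (Prod.fst ∘ Prod.snd) (splitIdx.right_inv w)

@[simp] lemma fvPart_splitIdx (w : Fin 2 × (Fin (a+1) → Fin 2) × (Fin b → Fin 2)) :
    fvPart (splitIdx.symm w) = w.2.2 :=
  congrArg (Prod.snd ∘ Prod.snd) (splitIdx.right_inv w)

lemma sum_split (f : Fin 2 → ℂ) (g : (Fin (a+1) → Fin 2) → ℂ) (h : (Fin b → Fin 2) → ℂ) :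
    ∑ j : Fin ((a+1)+(b+1)) → Fin 2, f (fcBit j) * g (fuPart j) * h (fvPart j)
      = (∑ c, f c) * (∑ u, g u) * (∑ t, h t) := by
  rw [← Equiv.sum_comp (splitIdx (a := a) (b := b)).symm
      (fun j => f (fcBit j) * g (fuPart j) * h (fvPart j))]
  simp only [fcBit_splitIdx, fuPart_splitIdx, fvPart_splitIdx, Fintype.sum_prod_type,
    Finset.sum_mul, Finset.mul_sum]
  conv_lhs => rw [Finset.sum_comm]
  conv_rhs => rw [Finset.sum_comm]
  exact Finset.sum_congr rfl fun u _ => Finset.sum_comm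

lemma tens_mul (C C' : M2) (P P' : QMat (a+1)) (Q Q' : QMat b) :
    tens C P Q * tens C' P' Q' = tens (C * C') (P * P') (Q * Q') := by
  ext z w
  show ∑ j, tens C P Q z j * tens C' P' Q' j w = _
  have : ∀ j, tens C P Q z j * tens C' P' Q' j w
      = (fun c => C (fcBit z) c * C' c (fcBit w)) (fcBit j)
        * (fun u => P (fuPart z) u * P' u (fuPart w)) (fuPart j)
        * (fun t => Q (fvPart z) t * Q' t (fvPart w)) (fvPart j) := by
    intro j; simp only [tens, Matrix.of_apply]; ring
  rw [Finset.sum_congr rfl fun j _ => this j,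
    sum_split (fun c => C (fcBit z) c * C' c (fcBit w))
      (fun u => P (fuPart z) u * P' u (fuPart w))
      (fun t => Q (fvPart z) t * Q' t (fvPart w))]
  simp only [tens, Matrix.of_apply, Matrix.mul_apply]

lemma tens_conj (C : M2) (P : QMat (a+1)) (Q : QMat b) :
    (tens C P Q)ᴴ = tens Cᴴ Pᴴ Qᴴ := by
  ext z w
  simp only [tens, Matrix.conjTranspose_apply, Matrix.of_apply, star_mul']
  try ring

lemma tens_zero (P : QMat (a+1)) (Q : QMat b) : tens 0 P Q = 0 := by
  ext z w; simp [tens]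

end Tens

section Bridge

variable {a b : ℕ}

lemma forall_u_iff (z w : Fin ((a+1)+(b+1)) → Fin 2) :
    (∀ i : Fin (a+1), z (Fin.castAdd (b+1) i) = w (Fin.castAdd (b+1) i)) ↔
      fuPart z = fuPart w := by
  rw [funext_iff]; exact Iff.rfl

lemma forall_v_iff (z w : Fin ((a+1)+(b+1)) → Fin 2) :
    (∀ i : Fin b, z (Fin.natAdd (a+1) i.succ) = w (Fin.natAdd (a+1) i.succ)) ↔
      fvPart z = fvPart w := by
  rw [funext_iff]
  refine forall_congr' fun i => ?_
  rw [show z (Fin.natAdd (a+1) i.succ) = fvPart z i from zcongr z (by show (a+1)+(i.val+1) = a+2+i.val; omega),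
      show w (Fin.natAdd (a+1) i.succ) = fvPart w i from zcongr w (by show (a+1)+(i.val+1) = a+2+i.val; omega)]

lemma gammaCtrl_eq (X : QMat (a+1)) :
    gammaCtrl (a := a+1) (n := b) X = tens (Em 1 1) X 1 + tens (Em 0 0) 1 1 := by
  ext z w
  simp only [gammaCtrl, Matrix.of_apply, tens, Matrix.add_apply, Matrix.one_apply,
    forall_u_iff, forall_v_iff,
    show z (Fin.natAdd (a+1) (0 : Fin (b+1))) = fcBit z from rfl,
    show w (Fin.natAdd (a+1) (0 : Fin (b+1))) = fcBit w from rfl,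
    show (fun i : Fin (a+1) => z (Fin.castAdd (b+1) i)) = fuPart z from rfl,
    show (fun i : Fin (a+1) => w (Fin.castAdd (b+1) i)) = fuPart w from rfl]
  rcases two (fcBit z) with h | h <;> rcases two (fcBit w) with h' | h' <;>
    simp [Em, h, h'] <;> split_ifs <;> ring

lemma idLeft_btens (C : M2) (Q : QMat b) :
    idLeft (m := a+1) (btens C Q) = tens C 1 Q := by
  ext z w
  have h2 : Fin.tail (fun i : Fin (b+1) => z (Fin.natAdd (a+1) i)) = fvPart z := by
    funext i
    exact zcongr z (by show (a+1)+(i.val+1) = a+2+i.val; omega)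
  have h2' : Fin.tail (fun i : Fin (b+1) => w (Fin.natAdd (a+1) i)) = fvPart w := by
    funext i
    exact zcongr w (by show (a+1)+(i.val+1) = a+2+i.val; omega)
  simp only [idLeft, btens, tens, Matrix.of_apply, Matrix.one_apply, forall_u_iff, h2, h2',
    show (fun i : Fin (b+1) => z (Fin.natAdd (a+1) i)) 0 = fcBit z from rfl,
    show (fun i : Fin (b+1) => w (Fin.natAdd (a+1) i)) 0 = fcBit w from rfl]
  split_ifs <;> ring

lemma idLeft_add (A B : QMat (b+1)) :
    idLeft (m := a+1) (A + B) = idLeft A + idLeft B := by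
  ext z w
  simp [idLeft, mul_add]

lemma Amat_eq (S0U S1U T0U T1U : QMat a) (S0V S1V : QMat b) :
    Amat S0U S1U T0U T1U S0V S1V =
      tens (Em 0 0) (ctrlOn S0U S1U) S0V + tens (Em 1 1) (ctrlOn T0U T1U)ᴴ S1V := by
  ext z w
  rcases two (fcBit z) with h | h <;> rcases two (fcBit w) with h' | h' <;>
    simp [Amat, tens, Em, Matrix.add_apply, h, h']

lemma Bmat_eq (S0U S1U T0U T1U : QMat a) (T0V T1V : QMat b) :
    Bmat S0U S1U T0U T1U T0V T1V =
      tens (Em 0 0) (ctrlOn S0U S1U)ᴴ T0V + tens (Em 1 1) (ctrlOn T0U T1U) T1V := by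
  ext z w
  rcases two (fcBit z) with h | h <;> rcases two (fcBit w) with h' | h' <;>
    simp [Bmat, tens, Em, Matrix.add_apply, h, h']

lemma fin_one_ne_zero' : ¬ ((1:Fin 2) = 0) := by decide
lemma fin_zero_ne_one' : ¬ ((0:Fin 2) = 1) := by decide

lemma mcancel {n : ℕ} {A B : QMat n} (h : A * B = 1) (M : QMat n) :
    A * (B * M) = M := by rw [← mul_assoc, h, one_mul]

lemma ctrlOn_conj {n : ℕ} (A B : QMat n) : (ctrlOn A B)ᴴ = ctrlOn Aᴴ Bᴴ := by
  rw [ctrlOn_eq, ctrlOn_eq, Matrix.conjTranspose_add, btens_conj, btens_conj, Em_conj, Em_conj]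

lemma ctrlOn_mul {n : ℕ} (A B C D : QMat n) :
    ctrlOn A B * ctrlOn C D = ctrlOn (A*C) (B*D) := by
  rw [ctrlOn_eq, ctrlOn_eq, ctrlOn_eq]
  simp [add_mul, mul_add, btens_mul, Em_mul, btens_zero]

lemma ctrlOn_one {n : ℕ} : ctrlOn (1 : QMat n) 1 = 1 := by
  rw [ctrlOn_eq, ← one_eq]

lemma ctrlOn_unit {n : ℕ} {A B : QMat n} (hA : A ∈ UG n) (hB : B ∈ UG n) :
    (ctrlOn A B)ᴴ * ctrlOn A B = 1 ∧ ctrlOn A B * (ctrlOn A B)ᴴ = 1 := by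
  have hA1 : Aᴴ * A = 1 := by
    simpa [Matrix.star_eq_conjTranspose] using Matrix.mem_unitaryGroup_iff'.mp hA
  have hA2 : A * Aᴴ = 1 := by
    simpa [Matrix.star_eq_conjTranspose] using Matrix.mem_unitaryGroup_iff.mp hA
  have hB1 : Bᴴ * B = 1 := by
    simpa [Matrix.star_eq_conjTranspose] using Matrix.mem_unitaryGroup_iff'.mp hB
  have hB2 : B * Bᴴ = 1 := by
    simpa [Matrix.star_eq_conjTranspose] using Matrix.mem_unitaryGroup_iff.mp hB
  constructor <;> rw [ctrlOn_conj, ctrlOn_mul] <;>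
    simp [hA1, hA2, hB1, hB2, ctrlOn_one]

lemma Vexpand {n : ℕ} (S0 S1 T0 T1 : QMat n) (σ1 σ2 : (Fin n → Fin 2) → ℝ) :
    ctrlOn S0 S1 * csmat σ1 σ2 * ctrlOn T0 T1 =
      btens (Em 0 0) (S0 * Matrix.diagonal (fun t => (σ1 t : ℂ)) * T0)
      + btens (Em 0 1) (S0 * Matrix.diagonal (fun t => (σ2 t : ℂ)) * T1)
      + btens (Em 1 0) (S1 * Matrix.diagonal (fun t => -(σ2 t : ℂ)) * T0)
      + btens (Em 1 1) (S1 * Matrix.diagonal (fun t => (σ1 t : ℂ)) * T1) := by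
  rw [ctrlOn_eq, ctrlOn_eq, csmat_eq]
  simp [add_mul, mul_add, btens_mul, Em_mul, btens_zero]
  abel

end Bridge

end Valley17

open Valley17

set_option maxHeartbeats 1000000 in
/-- With given CS decompositions of `U` and `V`, the valley
`W = Γ†(I⊗V)Γ` equals `A · W^Σ · B`, where `W^Σ` is the valley of the cosine–sine middle
factors `Σ^U`, `Σ^V`, and `A`, `B` are as displayed. -/
theorem valley_reduction_to_diagonal (a b : ℕ) (U : QMat (a+1)) (V : QMat (b+1))
    (hU : U ∈ UG (a+1)) (hV : V ∈ UG (b+1))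
    (S0U S1U T0U T1U : QMat a) (σ1U σ2U : (Fin a → Fin 2) → ℝ)
    (hCSU : IsCSD U S0U S1U T0U T1U σ1U σ2U)
    (S0V S1V T0V T1V : QMat b) (σ1V σ2V : (Fin b → Fin 2) → ℝ)
    (hCSV : IsCSD V S0V S1V T0V T1V σ1V σ2V) :
    valleyStep U V =
      Amat S0U S1U T0U T1U S0V S1V *
      valleyStep (csmat σ1U σ2U) (csmat σ1V σ2V) *
      Bmat S0U S1U T0U T1U T0V T1V := by
  obtain ⟨hS0U, hS1U, hT0U, hT1U, -, -, -, hUfac⟩ := hCSU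
  obtain ⟨-, -, -, -, -, -, -, hVfac⟩ := hCSV
  set P := ctrlOn S0U S1U with hPdef
  set Qm := ctrlOn T0U T1U with hQdef
  set Sg := csmat σ1U σ2U with hSgdef
  have hPc : Pᴴ * P = 1 := (ctrlOn_unit hS0U hS1U).1
  have hPP : P * Pᴴ = 1 := (ctrlOn_unit hS0U hS1U).2
  have hQc : Qmᴴ * Qm = 1 := (ctrlOn_unit hT0U hT1U).1
  have hQQ : Qm * Qmᴴ = 1 := (ctrlOn_unit hT0U hT1U).2
  have hUc : Uᴴ * U = 1 := by
    simpa [Matrix.star_eq_conjTranspose] using Matrix.mem_unitaryGroup_iff'.mp hU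
  have key : Qmᴴ * (Sgᴴ * (Sg * Qm)) = 1 := by
    rw [hUfac] at hUc
    simpa [Matrix.conjTranspose_mul, mul_assoc, mcancel hPc] using hUc
  have hSgc : Sgᴴ * Sg = 1 := by
    have h2 : Sgᴴ * (Sg * Qm) = Qm := by
      have h3 := congrArg (fun M => Qm * M) key
      simpa [mcancel hQQ] using h3
    calc Sgᴴ * Sg = Sgᴴ * (Sg * (Qm * Qmᴴ)) := by rw [hQQ, mul_one]
      _ = (Sgᴴ * (Sg * Qm)) * Qmᴴ := by simp [mul_assoc]
      _ = 1 := by rw [h2, hQQ]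
  rw [valleyStep, valleyStep, hVfac, Vexpand S0V S1V T0V T1V σ1V σ2V,
    csmat_eq σ1V σ2V, hUfac, Amat_eq, Bmat_eq, ← hPdef, ← hQdef]
  simp only [gammaCtrl_eq, idLeft_add, idLeft_btens]
  simp only [Matrix.conjTranspose_add, tens_conj, Em_conj, Matrix.conjTranspose_one,
    Matrix.conjTranspose_mul]
  simp only [Matrix.mul_add, Matrix.add_mul, tens_mul]
  simp only [Em_mul, reduceIte, fin_one_ne_zero', fin_zero_ne_one', tens_zero, zero_add,
    add_zero, zero_mul, mul_zero]
  simp only [mul_one, one_mul, mul_assoc]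
  simp only [mcancel hPc, mcancel hSgc, hQc, hPP]
  abel
end

section
/- Let a, b ≥ 1, let Σ₁^U, Σ₂^U be 2^{a−1}×2^{a−1} diagonal matrices with nonnegative real entries satisfying (Σ₁^U)² + (Σ₂^U)² = I, and similarly Σ₁^V, Σ₂^V of size 2^{b−1}×2^{b−1}. Define the unitaries Σ^U := [[Σ₁^U, Σ₂^U], [−Σ₂^U, Σ₁^U]] and Σ^V := [[Σ₁^V, Σ₂^V], [−Σ₂^V, Σ₁^V]], and the diagonal valley W^Σ := Γ_Σ† (I_{2^a} ⊗ Σ^V) Γ_Σ, where Γ_Σ = Σ^U ⊗ |1⟩⟨1| ⊗ I_{2^{b−1}} + I_{2^a} ⊗ |0⟩⟨0| ⊗ I_{2^{b−1}}. Then there exist 2×2 unitary matrices L_{x,y}, indexed by x ∈ {0, …, 2^{a−1}−1} and y ∈ {0, …, 2^{b−1}−1}, such that, setting L̂ := Σ_{x,y} |x⟩⟨x| ⊗ L_{x,y} ⊗ |y⟩⟨y| (a 2^{a+b−1}×2^{a+b−1} unitary), Ẑ := I_{2^{a−1}} ⊗ Z ⊗ I_{2^{b−1}}, X̂ := I_{2^{a−1}}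 ⊗ X ⊗ I_{2^{b−1}}, Σ₂^W := Σ₂^U ⊗ I₂ ⊗ Σ₂^V, and Σ₁^W := the nonnegative square root of I − (Σ₂^W)², the tuple with S₀ = L̂†·Ẑ, S₁ = L̂†, T₀ = L̂·X̂, T₁ = Ẑ·L̂·X̂ is a CS decomposition of W^Σ: W^Σ = [[S₀, 0], [0, S₁]] · [[Σ₁^W, Σ₂^W], [−Σ₂^W, Σ₁^W]] · [[T₀, 0], [0, T₁]]. -/
open Matrix

/-- The first `a` bits of an `(a+1+b)`-bit string (the `U`-stub register). -/
def uuPart {a b : ℕ} (z : Fin ((a+1)+b) → Fin 2) (i : Fin a) : Fin 2 :=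
  z ⟨i.val, by have := i.isLt; omega⟩

/-- The middle bit of an `(a+1+b)`-bit string. -/
def ccBit {a b : ℕ} (z : Fin ((a+1)+b) → Fin 2) : Fin 2 :=
  z ⟨a, by omega⟩

/-- The last `b` bits of an `(a+1+b)`-bit string (the `V`-stub register). -/
def vvPart {a b : ℕ} (z : Fin ((a+1)+b) → Fin 2) (i : Fin b) : Fin 2 :=
  z ⟨a + 1 + i.val, by have := i.isLt; omega⟩

/-- `L̂ := Σ_{x,y} |x⟩⟨x| ⊗ L_{x,y} ⊗ |y⟩⟨y|` for a family of one-qubit gates `L`. -/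
noncomputable def Lhat {a b : ℕ}
    (L : (Fin a → Fin 2) → (Fin b → Fin 2) → Matrix (Fin 2) (Fin 2) ℂ) :
    QMat ((a+1)+b) :=
  Matrix.of fun z w =>
    (if uuPart z = uuPart w ∧ vvPart z = vvPart w then 1 else 0) *
    L (uuPart z) (vvPart z) (ccBit z) (ccBit w)

/-- `Ẑ := I ⊗ Z ⊗ I` (Pauli `Z` on the middle qubit). -/
noncomputable def Zhat {a b : ℕ} : QMat ((a+1)+b) :=
  Matrix.of fun z w => if z = w then (if ccBit z = 0 then 1 else -1) else 0

/-- `X̂ := I ⊗ X ⊗ I` (Pauli `X` on the middle qubit). -/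
noncomputable def Xhat {a b : ℕ} : QMat ((a+1)+b) :=
  Matrix.of fun z w =>
    if uuPart z = uuPart w ∧ vvPart z = vvPart w ∧ ccBit z ≠ ccBit w then 1 else 0

namespace DVC

variable {a b : ℕ}

abbrev Ker := Matrix (Fin 2 × Fin 2) (Fin 2 × Fin 2) ℂ
abbrev Fam (a b : ℕ) := (Fin a → Fin 2) → (Fin b → Fin 2) → Matrix (Fin 2) (Fin 2) ℂ
abbrev XY (a b : ℕ) := (Fin a → Fin 2) × (Fin b → Fin 2)

lemma fin2 (c : Fin 2) : c = 0 ∨ c = 1 := by omega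

/-- n-level encoding -/
def encN (x : Fin a → Fin 2) (m : Fin 2) (y : Fin b → Fin 2) : Fin ((a+1)+b) → Fin 2 :=
  fun i => if h : i.val < a then x ⟨i.val, h⟩ else if h2 : i.val = a then m
           else y ⟨i.val - (a+1), by have := i.isLt; omega⟩

lemma zcongr {n : ℕ} (z : Fin n → Fin 2) {i j : Fin n} (h : i.val = j.val) : z i = z j := by
  congr 1; exact Fin.ext h

lemma uuPart_encN (x : Fin a → Fin 2) (m : Fin 2) (y : Fin b → Fin 2) :
    uuPart (encN x m y) = x := by
  funext i
  have hi := i.isLt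
  simp [uuPart, encN, hi]

lemma ccBit_encN (x : Fin a → Fin 2) (m : Fin 2) (y : Fin b → Fin 2) :
    ccBit (a := a) (b := b) (encN x m y) = m := by
  simp [ccBit, encN]

lemma vvPart_encN (x : Fin a → Fin 2) (m : Fin 2) (y : Fin b → Fin 2) :
    vvPart (encN x m y) = y := by
  funext i
  have hi := i.isLt
  simp only [vvPart, encN]
  rw [dif_neg (by omega), dif_neg (by omega)]
  congr 1
  exact Fin.ext (by simp)

/-- The n-level structure equiv. -/
def eN : (Fin ((a+1)+b) → Fin 2) ≃ (Fin 2 × XY a b) where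
  toFun z := (ccBit z, uuPart z, vvPart z)
  invFun p := encN p.2.1 p.1 p.2.2
  left_inv z := by
    funext i
    have hi := i.isLt
    simp only [encN]
    by_cases h : i.val < a
    · rw [dif_pos h]; exact (zcongr z rfl)
    · by_cases h2 : i.val = a
      · rw [dif_neg h, dif_pos h2]; exact zcongr z (by simp [ccBit, h2])
      · rw [dif_neg h, dif_neg h2]; exact zcongr z (by simp [vvPart]; omega)
  right_inv p := by
    obtain ⟨m, x, y⟩ := p
    simp [uuPart_encN, ccBit_encN, vvPart_encN]

def tfN (K : Fam a b) : QMat ((a+1)+b) :=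
  (Matrix.blockDiagonal fun p : XY a b => K p.1 p.2).submatrix eN eN

lemma Lhat_eq_tfN (K : Fam a b) : Lhat K = tfN K := by
  ext z w
  simp only [Lhat, tfN, Matrix.submatrix_apply, Matrix.of_apply, eN, Equiv.coe_fn_mk,
    Matrix.blockDiagonal_apply, Prod.mk.injEq]
  by_cases h1 : uuPart z = uuPart w <;> by_cases h2 : vvPart z = vvPart w <;>
    simp [h1, h2]

lemma tfN_mul (K K' : Fam a b) : tfN K * tfN K' = tfN (fun x y => K x y * K' x y) := by
  unfold tfN
  rw [Matrix.submatrix_mul_equiv, ← Matrix.blockDiagonal_mul]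

lemma tfN_conj (K : Fam a b) : (tfN K)ᴴ = tfN (fun x y => (K x y)ᴴ) := by
  unfold tfN
  rw [Matrix.conjTranspose_submatrix, Matrix.blockDiagonal_conjTranspose]

lemma tfN_one : tfN (a := a) (b := b) (fun _ _ => 1) = 1 := by
  unfold tfN
  rw [show (fun p : XY a b => (1 : Matrix (Fin 2) (Fin 2) ℂ)) = 1 from rfl,
    Matrix.blockDiagonal_one, Matrix.submatrix_one_equiv]

lemma Lhat_mul (K K' : Fam a b) : Lhat K * Lhat K' = Lhat (fun x y => K x y * K' x y) := by
  rw [Lhat_eq_tfN, Lhat_eq_tfN, tfN_mul, ← Lhat_eq_tfN]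

lemma Lhat_conj (K : Fam a b) : (Lhat K)ᴴ = Lhat (fun x y => (K x y)ᴴ) := by
  rw [Lhat_eq_tfN, tfN_conj, ← Lhat_eq_tfN]

lemma Lhat_mem (K : Fam a b) (h : ∀ x y, K x y ∈ Matrix.unitaryGroup (Fin 2) ℂ) :
    Lhat K ∈ UG ((a+1)+b) := by
  rw [Matrix.mem_unitaryGroup_iff]
  show Lhat K * (Lhat K)ᴴ = 1
  rw [Lhat_conj, Lhat_mul]
  have hK : (fun x y => K x y * (K x y)ᴴ) = (fun _ _ => (1 : Matrix (Fin 2) (Fin 2) ℂ)) := by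
    funext x y
    exact Matrix.mem_unitaryGroup_iff.mp (h x y)
  rw [hK, Lhat_eq_tfN, tfN_one]

def Zm : Matrix (Fin 2) (Fin 2) ℂ := !![1, 0; 0, -1]
def Xm : Matrix (Fin 2) (Fin 2) ℂ := !![0, 1; 1, 0]

lemma eqN_iff (z w : Fin ((a+1)+b) → Fin 2) :
    z = w ↔ uuPart z = uuPart w ∧ ccBit z = ccBit w ∧ vvPart z = vvPart w := by
  constructor
  · rintro rfl; exact ⟨rfl, rfl, rfl⟩
  · rintro ⟨h1, h2, h3⟩
    apply eN.injective
    simp [eN, h1, h2, h3]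

lemma Zhat_eq : Zhat (a := a) (b := b) = Lhat (fun _ _ => Zm) := by
  ext z w
  rcases fin2 (ccBit z) with hc | hc <;> rcases fin2 (ccBit w) with hw | hw <;>
    by_cases h1 : uuPart z = uuPart w <;> by_cases h3 : vvPart z = vvPart w <;>
      simp [Zhat, Lhat, Zm, eqN_iff z w, h1, h3, hc, hw]

lemma Xhat_eq : Xhat (a := a) (b := b) = Lhat (fun _ _ => Xm) := by
  ext z w
  rcases fin2 (ccBit z) with hc | hc <;> rcases fin2 (ccBit w) with hw | hw <;>
    by_cases h1 : uuPart z = uuPart w <;> by_cases h3 : vvPart z = vvPart w <;>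
      simp [Xhat, Lhat, Xm, h1, h3, hc, hw]

end DVC
namespace DVC

variable {a b : ℕ}

/-- full-level projections -/
def q0 (z : Fin ((a+1)+(b+1)) → Fin 2) : Fin 2 := z ⟨0, by omega⟩
def xP (z : Fin ((a+1)+(b+1)) → Fin 2) : Fin a → Fin 2 := uuPart (Fin.tail z)
def midP (z : Fin ((a+1)+(b+1)) → Fin 2) : Fin 2 := ccBit (Fin.tail z)
def yP (z : Fin ((a+1)+(b+1)) → Fin 2) : Fin b → Fin 2 := vvPart (Fin.tail z)

/-- The full-level structure equiv. -/
def eF : (Fin ((a+1)+(b+1)) → Fin 2) ≃ ((Fin 2 × Fin 2) × XY a b) where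
  toFun z := ((q0 z, midP z), (xP z, yP z))
  invFun p := Fin.cons p.1.1 (encN p.2.1 p.1.2 p.2.2)
  left_inv z := by
    have h := eN.left_inv (Fin.tail z)
    simp only [eN, Equiv.coe_fn_mk, Equiv.coe_fn_symm_mk] at h
    show Fin.cons (q0 z) (encN (xP z) (midP z) (yP z)) = z
    rw [show encN (xP z) (midP z) (yP z) = Fin.tail z from h,
      show q0 z = z (0 : Fin (((a+1)+b)+1)) from zcongr z (by simp)]
    exact Fin.cons_self_tail z
  right_inv p := by
    obtain ⟨⟨q, m⟩, x, y⟩ := p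
    have hq : q0 (Fin.cons q (encN x m y) : Fin (((a+1)+b)+1) → Fin 2) = q := by
      rw [show q0 (Fin.cons q (encN x m y) : Fin (((a+1)+b)+1) → Fin 2)
            = (Fin.cons q (encN x m y) : Fin (((a+1)+b)+1) → Fin 2) 0 from
          zcongr _ (by simp)]
      exact Fin.cons_zero _ _
    simp only [xP, midP, yP, Fin.tail_cons, hq,
      uuPart_encN, ccBit_encN, vvPart_encN]

def tfF (K : (Fin a → Fin 2) → (Fin b → Fin 2) → Ker) : QMat ((a+1)+(b+1)) :=
  (Matrix.blockDiagonal fun p : XY a b => K p.1 p.2).submatrix eF eF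

lemma tfF_apply (K : (Fin a → Fin 2) → (Fin b → Fin 2) → Ker)
    (z w : Fin ((a+1)+(b+1)) → Fin 2) :
    tfF K z w = if xP z = xP w ∧ yP z = yP w then
      K (xP z) (yP z) (q0 z, midP z) (q0 w, midP w) else 0 := by
  simp only [tfF, Matrix.submatrix_apply, eF, Equiv.coe_fn_mk,
    Matrix.blockDiagonal_apply, Prod.mk.injEq]

lemma tfF_mul (K K' : (Fin a → Fin 2) → (Fin b → Fin 2) → Ker) :
    tfF K * tfF K' = tfF (fun x y => K x y * K' x y) := by
  unfold tfF
  rw [Matrix.submatrix_mul_equiv, ← Matrix.blockDiagonal_mul]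

lemma tfF_conj (K : (Fin a → Fin 2) → (Fin b → Fin 2) → Ker) :
    (tfF K)ᴴ = tfF (fun x y => (K x y)ᴴ) := by
  unfold tfF
  rw [Matrix.conjTranspose_submatrix, Matrix.blockDiagonal_conjTranspose]

/-- kernels -/
def cs2e (c s : ℝ) (q q' : Fin 2) : ℂ :=
  if q = 0 then (if q' = 0 then (c:ℂ) else (s:ℂ)) else (if q' = 0 then -(s:ℂ) else (c:ℂ))

def GK (c s : ℝ) : Ker := fun p p' =>
  if p.2 = p'.2 then (if p.2 = 1 then cs2e c s p.1 p'.1 else if p.1 = p'.1 then 1 else 0)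
  else 0

def MK (c s : ℝ) : Ker := fun p p' => if p.1 = p'.1 then cs2e c s p.2 p'.2 else 0

def csK (c s : ℝ) : Ker := fun p p' => if p.2 = p'.2 then cs2e c s p.1 p'.1 else 0

def ctrl2 (A B : Matrix (Fin 2) (Fin 2) ℂ) : Ker := fun p p' =>
  if p.1 = p'.1 then (if p.1 = 0 then A p.2 p'.2 else B p.2 p'.2) else 0

/-- index-compatibility lemmas -/
lemma yP_eq_natAdd (z : Fin ((a+1)+(b+1)) → Fin 2) (i : Fin b) :
    z (Fin.natAdd (a+1) i.succ) = yP z i := rfl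

lemma midP_eq_natAdd (z : Fin ((a+1)+(b+1)) → Fin 2) :
    z (Fin.natAdd (a+1) (0 : Fin (b+1))) = midP z := zcongr z (by simp)

lemma q0_eq_castAdd (z : Fin ((a+1)+(b+1)) → Fin 2) :
    z (Fin.castAdd (b+1) (0 : Fin (a+1))) = q0 z := zcongr z (by simp)

lemma xP_eq_castAdd (z : Fin ((a+1)+(b+1)) → Fin 2) (i : Fin a) :
    z (Fin.castAdd (b+1) i.succ) = xP z i := rfl

lemma tail_castAdd (z : Fin ((a+1)+(b+1)) → Fin 2) :
    Fin.tail (fun i : Fin (a+1) => z (Fin.castAdd (b+1) i)) = xP z := rfl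

lemma head_castAdd (z : Fin ((a+1)+(b+1)) → Fin 2) :
    (fun i : Fin (a+1) => z (Fin.castAdd (b+1) i)) 0 = q0 z := q0_eq_castAdd z

lemma tail_natAdd (z : Fin ((a+1)+(b+1)) → Fin 2) :
    Fin.tail (fun i : Fin (b+1) => z (Fin.natAdd (a+1) i)) = yP z := rfl

lemma head_natAdd (z : Fin ((a+1)+(b+1)) → Fin 2) :
    (fun i : Fin (b+1) => z (Fin.natAdd (a+1) i)) 0 = midP z := midP_eq_natAdd z

lemma condY (z w : Fin ((a+1)+(b+1)) → Fin 2) :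
    (∀ i : Fin b, z (Fin.natAdd (a+1) i.succ) = w (Fin.natAdd (a+1) i.succ)) ↔
      yP z = yP w := by
  simp only [yP_eq_natAdd]
  exact (funext_iff).symm

lemma condQX (z w : Fin ((a+1)+(b+1)) → Fin 2) :
    (∀ i : Fin (a+1), z (Fin.castAdd (b+1) i) = w (Fin.castAdd (b+1) i)) ↔
      (q0 z = q0 w ∧ xP z = xP w) := by
  rw [Fin.forall_fin_succ]
  simp only [q0_eq_castAdd, xP_eq_castAdd]
  exact and_congr Iff.rfl (funext_iff).symm

lemma tail_eq_iff (z w : Fin ((a+1)+(b+1)) → Fin 2) :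
    Fin.tail z = Fin.tail w ↔ (xP z = xP w ∧ midP z = midP w ∧ yP z = yP w) :=
  eqN_iff (Fin.tail z) (Fin.tail w)

end DVC
namespace DVC

variable {a b : ℕ}

lemma q0_eq' (z : Fin (((a+1)+b)+1) → Fin 2) : z 0 = q0 (a := a) (b := b) z :=
  zcongr z (by simp)

lemma gamma_eq (σ1U σ2U : (Fin a → Fin 2) → ℝ) :
    gammaCtrl (a := a+1) (n := b) (csmat σ1U σ2U)
      = tfF (fun x y => GK (σ1U x) (σ2U x)) := by
  ext z w
  rw [tfF_apply]
  simp only [gammaCtrl, csmat, Matrix.of_apply, condY z w, midP_eq_natAdd,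
    tail_castAdd, head_castAdd, condQX z w, GK, cs2e]
  by_cases hy : yP z = yP w <;> by_cases hm : midP z = midP w <;>
    by_cases hx : xP z = xP w <;> by_cases hq : q0 z = q0 w <;>
      rcases fin2 (midP z) with hmz | hmz <;>
        simp_all
  all_goals (rcases fin2 (q0 z) with hqz | hqz <;> simp_all)

lemma idLeft_eq (σ1V σ2V : (Fin b → Fin 2) → ℝ) :
    idLeft (m := a+1) (csmat σ1V σ2V)
      = tfF (fun x y => MK (σ1V y) (σ2V y)) := by
  ext z w
  rw [tfF_apply]
  simp only [idLeft, csmat, Matrix.of_apply, condQX z w,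
    tail_natAdd, head_natAdd, MK, cs2e]
  by_cases hy : yP z = yP w <;> by_cases hm : midP z = midP w <;>
    by_cases hx : xP z = xP w <;> by_cases hq : q0 z = q0 w <;>
      rcases fin2 (midP z) with hmz | hmz <;>
        simp_all

lemma ctrlOn_eq (K0 K1 : Fam a b) :
    ctrlOn (Lhat K0) (Lhat K1) = tfF (fun x y => ctrl2 (K0 x y) (K1 x y)) := by
  ext z w
  rw [tfF_apply]
  simp only [ctrlOn, Lhat, Matrix.of_apply, q0_eq', ctrl2]
  show _ = if xP z = xP w ∧ yP z = yP w then _ else (0:ℂ)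
  by_cases hy : yP z = yP w <;> by_cases hx : xP z = xP w <;>
    by_cases hq : q0 z = q0 w <;>
      rcases fin2 (q0 z) with hqz | hqz <;>
        simp_all [xP, yP, midP]

lemma csmatW_eq (f g : (Fin a → Fin 2) → (Fin b → Fin 2) → ℝ) :
    csmat (n := (a+1)+b) (fun t => f (uuPart t) (vvPart t)) (fun t => g (uuPart t) (vvPart t))
      = tfF (fun x y => csK (f x y) (g x y)) := by
  ext z w
  rw [tfF_apply]
  simp only [csmat, Matrix.of_apply, q0_eq', tail_eq_iff z w, csK, cs2e]
  by_cases hy : yP z = yP w <;> by_cases hm : midP z = midP w <;>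
    by_cases hx : xP z = xP w <;> by_cases hq : q0 z = q0 w <;>
      rcases fin2 (q0 z) with hqz | hqz <;>
        simp_all [xP, yP, midP]

lemma valley_eq (σ1U σ2U : (Fin a → Fin 2) → ℝ) (σ1V σ2V : (Fin b → Fin 2) → ℝ) :
    valleyStep (csmat σ1U σ2U) (csmat σ1V σ2V)
      = tfF (fun x y => (GK (σ1U x) (σ2U x))ᴴ * MK (σ1V y) (σ2V y) * GK (σ1U x) (σ2U x)) := by
  unfold valleyStep
  rw [gamma_eq, idLeft_eq, tfF_conj, tfF_mul, tfF_mul]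

end DVC
namespace DVC

noncomputable def Lab (α β : ℝ) : Matrix (Fin 2) (Fin 2) ℂ :=
  !![(α:ℂ), (β:ℂ); -(β:ℂ), (α:ℂ)]

noncomputable def Lmat (cU sU cV sV : ℝ) : Matrix (Fin 2) (Fin 2) ℂ :=
  if sU * sV = 1 then Lab 1 0 else
    Lab (Real.sqrt ((1 + cU*sV/Real.sqrt (1-(sU*sV)^2))/2))
        (Real.sqrt ((1 - cU*sV/Real.sqrt (1-(sU*sV)^2))/2))

lemma sle1 {x : ℝ} (h0 : 0 ≤ x) (h : x^2 ≤ 1) : x ≤ 1 := by nlinarith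

lemma Lmat_spec (cU sU cV sV : ℝ) (hcU : 0 ≤ cU) (hsU : 0 ≤ sU) (hU : cU^2+sU^2=1)
    (hcV : 0 ≤ cV) (hsV : 0 ≤ sV) (hV : cV^2+sV^2=1) :
    ∃ α β : ℝ, Lmat cU sU cV sV = Lab α β ∧ α^2+β^2 = 1 ∧
      Real.sqrt (1-(sU*sV)^2)*(α^2-β^2) = cU*sV ∧
      Real.sqrt (1-(sU*sV)^2)*(2*(α*β)) = cV := by
  have hsU1 : sU ≤ 1 := sle1 hsU (by nlinarith)
  have hsV1 : sV ≤ 1 := sle1 hsV (by nlinarith)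
  have hs0 : 0 ≤ sU * sV := mul_nonneg hsU hsV
  have hs1 : sU * sV ≤ 1 := by nlinarith
  by_cases h : sU * sV = 1
  · have hsU' : sU = 1 := by nlinarith
    have hsV' : sV = 1 := by nlinarith
    have hcU' : cU = 0 := by nlinarith
    have hcV' : cV = 0 := by nlinarith
    refine ⟨1, 0, by rw [Lmat, if_pos h], by norm_num, ?_, ?_⟩
    · rw [h]; norm_num [hcU']
    · rw [h]; norm_num [hcV']
  · have hslt : sU * sV < 1 := lt_of_le_of_ne hs1 h
    have hpos : 0 < 1 - (sU*sV)^2 := by nlinarith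
    have hc : 0 < Real.sqrt (1 - (sU*sV)^2) := Real.sqrt_pos.mpr hpos
    set c := Real.sqrt (1 - (sU*sV)^2) with hcdef
    have hc2 : c^2 = 1 - (sU*sV)^2 := Real.sq_sqrt hpos.le
    set p := cU * sV / c with hp
    have hcusv : 0 ≤ cU * sV := mul_nonneg hcU hsV
    have hp0 : 0 ≤ p := div_nonneg hcusv hc.le
    have hkey : (cU*sV)^2 + cV^2 = c^2 := by
      rw [hc2]; linear_combination sV^2*hU + hV
    have hple : cU * sV ≤ c := by nlinarith [sq_nonneg cV]
    have hp1 : p ≤ 1 := (div_le_one hc).mpr hple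
    have h1p : 0 ≤ (1+p)/2 := by linarith
    have h1m : 0 ≤ (1-p)/2 := by linarith
    set α := Real.sqrt ((1+p)/2) with hα'
    set β := Real.sqrt ((1-p)/2) with hβ'
    have hα : α^2 = (1+p)/2 := Real.sq_sqrt h1p
    have hβ : β^2 = (1-p)/2 := Real.sq_sqrt h1m
    have hαβ : 0 ≤ α * β := mul_nonneg (Real.sqrt_nonneg _) (Real.sqrt_nonneg _)
    have hcp : c * p = cU * sV := by rw [hp]; field_simp
    refine ⟨α, β, ?_, by rw [hα, hβ]; ring, ?_, ?_⟩
    · rw [Lmat, if_neg h]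
    · rw [hα, hβ]; linear_combination hcp
    · have habsq : (α*β)^2 = ((1+p)/2)*((1-p)/2) := by rw [mul_pow, hα, hβ]
      have e1 : (c*(2*(α*β)))^2 = c^2*(1 - p^2) := by
        linear_combination (4*c^2)*habsq
      have e2 : c^2*(1-p^2) = cV^2 := by
        linear_combination (-(c*p + cU*sV))*hcp - hkey
      have h4 : (c*(2*(α*β)))^2 = cV^2 := e1.trans e2
      have hXnn : 0 ≤ c*(2*(α*β)) := mul_nonneg hc.le (by linarith)
      rw [← Real.sqrt_sq hXnn, h4, Real.sqrt_sq hcV]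

lemma Lab_mem (α β : ℝ) (h : α^2+β^2 = 1) : Lab α β ∈ Matrix.unitaryGroup (Fin 2) ℂ := by
  have hC : (α:ℂ)^2+(β:ℂ)^2 = 1 := by exact_mod_cast congrArg (Complex.ofReal) h
  rw [Matrix.mem_unitaryGroup_iff]
  show Lab α β * (Lab α β)ᴴ = 1
  ext i j
  fin_cases i <;> fin_cases j <;>
    simp [Lab, Matrix.mul_apply, Fin.sum_univ_two, Matrix.one_apply,
      Matrix.conjTranspose_apply, Complex.star_def, Complex.conj_ofReal] <;>
    first
      | linear_combination hC
      | ring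
      | norm_num

lemma Zm_mem : Zm ∈ Matrix.unitaryGroup (Fin 2) ℂ := by
  rw [Matrix.mem_unitaryGroup_iff]
  show Zm * Zmᴴ = 1
  ext i j
  fin_cases i <;> fin_cases j <;>
    simp [Zm, Matrix.mul_apply, Fin.sum_univ_two, Matrix.one_apply,
      Matrix.conjTranspose_apply]

lemma Xm_mem : Xm ∈ Matrix.unitaryGroup (Fin 2) ℂ := by
  rw [Matrix.mem_unitaryGroup_iff]
  show Xm * Xmᴴ = 1
  ext i j
  fin_cases i <;> fin_cases j <;>
    simp [Xm, Matrix.mul_apply, Fin.sum_univ_two, Matrix.one_apply,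
      Matrix.conjTranspose_apply]

lemma GK_conj (c s : ℝ) : (GK c s)ᴴ = GK c (-s) := by
  ext p p'
  obtain ⟨q, m⟩ := p
  obtain ⟨q', m'⟩ := p'
  fin_cases q <;> fin_cases m <;> fin_cases q' <;> fin_cases m' <;>
    simp [GK, cs2e, Matrix.conjTranspose_apply, Complex.star_def, Complex.conj_ofReal]

set_option maxHeartbeats 1600000 in
lemma key (cU sU cV sV c α β : ℝ)
    (h1 : α^2+β^2 = 1) (h2 : c*(α^2-β^2) = cU*sV) (h3 : c*(2*(α*β)) = cV)
    (hU : cU^2+sU^2 = 1) :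
    (GK cU sU)ᴴ * MK cV sV * GK cU sU =
      ctrl2 ((Lab α β)ᴴ * Zm) ((Lab α β)ᴴ) * csK c (sU*sV)
        * ctrl2 (Lab α β * Xm) (Zm * Lab α β * Xm) := by
  have H1 : (α:ℂ)^2+(β:ℂ)^2 = 1 := by exact_mod_cast congrArg (Complex.ofReal) h1
  have H2 : (c:ℂ)*((α:ℂ)^2-(β:ℂ)^2) = (cU:ℂ)*(sV:ℂ) := by
    exact_mod_cast congrArg (Complex.ofReal) h2
  have H3 : (c:ℂ)*(2*((α:ℂ)*(β:ℂ))) = (cV:ℂ) := by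
    exact_mod_cast congrArg (Complex.ofReal) h3
  have HU : (cU:ℂ)^2+(sU:ℂ)^2 = 1 := by exact_mod_cast congrArg (Complex.ofReal) hU
  have hA0 : (Lab α β)ᴴ * Zm = !![(α:ℂ), (β:ℂ); (β:ℂ), -(α:ℂ)] := by
    ext i j
    fin_cases i <;> fin_cases j <;>
      simp [Lab, Zm, Matrix.mul_apply, Fin.sum_univ_two, Matrix.conjTranspose_apply,
        Complex.star_def, Complex.conj_ofReal] <;> ring
  have hA1 : (Lab α β)ᴴ = !![(α:ℂ), -(β:ℂ); (β:ℂ), (α:ℂ)] := by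
    ext i j
    fin_cases i <;> fin_cases j <;>
      simp [Lab, Matrix.conjTranspose_apply, Complex.star_def, Complex.conj_ofReal]
  have hB0 : Lab α β * Xm = !![(β:ℂ), (α:ℂ); (α:ℂ), -(β:ℂ)] := by
    ext i j
    fin_cases i <;> fin_cases j <;>
      simp [Lab, Xm, Matrix.mul_apply, Fin.sum_univ_two]
  have hB1 : Zm * Lab α β * Xm = !![(β:ℂ), (α:ℂ); -(α:ℂ), (β:ℂ)] := by
    ext i j
    fin_cases i <;> fin_cases j <;>
      simp [Lab, Zm, Xm, Matrix.mul_apply, Fin.sum_univ_two]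
  rw [hA0, hA1, hB0, hB1, GK_conj]
  ext p p'
  obtain ⟨q, m⟩ := p
  obtain ⟨q', m'⟩ := p'
  fin_cases q <;> fin_cases m <;> fin_cases q' <;> fin_cases m' <;>
    simp [Matrix.mul_apply, Fintype.sum_prod_type, Fin.sum_univ_two,
      GK, MK, csK, ctrl2, cs2e] <;>
    ring_nf <;>
    first
      | rfl
      | linear_combination H3
      | linear_combination -H3
      | linear_combination H2
      | linear_combination -H2
      | linear_combination (cV:ℂ)*HU - H3
      | linear_combination H3 - (cV:ℂ)*HU
      | linear_combination (cV:ℂ)*HU + H3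
      | linear_combination (sV:ℂ)*HU
      | linear_combination (sV:ℂ)*(sU:ℂ)*H1
      | linear_combination -((sV:ℂ)*(sU:ℂ))*H1
      | linear_combination -(sV:ℂ)*HU
      | ring
      | norm_num

end DVC
/-- For diagonal cosine–sine data `Σ^U`, `Σ^V`, the diagonal valley
`W^Σ = Γ_Σ†(I⊗Σ^V)Γ_Σ` admits the explicit CS decomposition with
`S₀ = L̂†Ẑ`, `S₁ = L̂†`, `T₀ = L̂X̂`, `T₁ = ẐL̂X̂`, stubs `Σ₂^W = Σ₂^U ⊗ I₂ ⊗ Σ₂^V` and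
`Σ₁^W = √(I − (Σ₂^W)²)`, for some family of one-qubit unitaries `L_{x,y}`. -/
theorem diagonal_valley_csd (a b : ℕ)
    (σ1U σ2U : (Fin a → Fin 2) → ℝ) (σ1V σ2V : (Fin b → Fin 2) → ℝ)
    (hU1 : ∀ x, 0 ≤ σ1U x) (hU2 : ∀ x, 0 ≤ σ2U x)
    (hUs : ∀ x, σ1U x ^ 2 + σ2U x ^ 2 = 1)
    (hV1 : ∀ y, 0 ≤ σ1V y) (hV2 : ∀ y, 0 ≤ σ2V y)
    (hVs : ∀ y, σ1V y ^ 2 + σ2V y ^ 2 = 1) :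
    ∃ L : (Fin a → Fin 2) → (Fin b → Fin 2) → Matrix (Fin 2) (Fin 2) ℂ,
      (∀ x y, L x y ∈ Matrix.unitaryGroup (Fin 2) ℂ) ∧
      IsCSD (n := (a+1)+b) (valleyStep (csmat σ1U σ2U) (csmat σ1V σ2V))
        ((Lhat L)ᴴ * Zhat) ((Lhat L)ᴴ) (Lhat L * Xhat) (Zhat * Lhat L * Xhat)
        (fun z => Real.sqrt (1 - (σ2U (uuPart z) * σ2V (vvPart z))^2))
        (fun z => σ2U (uuPart z) * σ2V (vvPart z)) := by
  classical
  set L : DVC.Fam a b := fun x y => DVC.Lmat (σ1U x) (σ2U x) (σ1V y) (σ2V y) with hL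
  have spec := fun (x : Fin a → Fin 2) (y : Fin b → Fin 2) =>
    DVC.Lmat_spec (σ1U x) (σ2U x) (σ1V y) (σ2V y) (hU1 x) (hU2 x) (hUs x)
      (hV1 y) (hV2 y) (hVs y)
  choose α β hLab h1 h2 h3 using spec
  have hLU : ∀ x y, L x y ∈ Matrix.unitaryGroup (Fin 2) ℂ := by
    intro x y
    rw [hL]
    simp only []
    rw [hLab x y]
    exact DVC.Lab_mem _ _ (h1 x y)
  have hLhat : Lhat L ∈ UG ((a+1)+b) := DVC.Lhat_mem L hLU
  have hLhatH : (Lhat L)ᴴ ∈ UG ((a+1)+b) := by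
    rw [← Matrix.star_eq_conjTranspose]
    exact Unitary.star_mem hLhat
  have hZhat : Zhat (a := a) (b := b) ∈ UG ((a+1)+b) := by
    rw [DVC.Zhat_eq]
    exact DVC.Lhat_mem _ (fun _ _ => DVC.Zm_mem)
  have hXhat : Xhat (a := a) (b := b) ∈ UG ((a+1)+b) := by
    rw [DVC.Xhat_eq]
    exact DVC.Lhat_mem _ (fun _ _ => DVC.Xm_mem)
  have hbnd : ∀ x y, (σ2U x * σ2V y)^2 ≤ 1 := by
    intro x y
    nlinarith [hUs x, hVs y, sq_nonneg (σ1U x), sq_nonneg (σ1V y),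
      sq_nonneg (σ2U x), sq_nonneg (σ2V y), sq_nonneg (σ2U x * σ2V y)]
  refine ⟨L, hLU, mul_mem hLhatH hZhat, hLhatH, mul_mem hLhat hXhat,
    mul_mem (mul_mem hZhat hLhat) hXhat,
    fun z => Real.sqrt_nonneg _,
    fun z => mul_nonneg (hU2 _) (hV2 _), ?_, ?_⟩
  · intro z
    rw [Real.sq_sqrt (by linarith [hbnd (uuPart z) (vvPart z)])]
    ring
  · -- the matrix identity
    have e1 : (Lhat L)ᴴ * Zhat = Lhat (fun x y => (L x y)ᴴ * DVC.Zm) := by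
      rw [DVC.Zhat_eq, DVC.Lhat_conj, DVC.Lhat_mul]
    have e2 : Lhat L * Xhat = Lhat (fun x y => L x y * DVC.Xm) := by
      rw [DVC.Xhat_eq, DVC.Lhat_mul]
    have e3 : Zhat * Lhat L * Xhat = Lhat (fun x y => DVC.Zm * L x y * DVC.Xm) := by
      rw [DVC.Zhat_eq, DVC.Xhat_eq, DVC.Lhat_mul, DVC.Lhat_mul]
    have e4 : csmat (n := (a+1)+b)
        (fun z => Real.sqrt (1 - (σ2U (uuPart z) * σ2V (vvPart z))^2))
        (fun z => σ2U (uuPart z) * σ2V (vvPart z))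
        = DVC.tfF (fun x y =>
            DVC.csK (Real.sqrt (1 - (σ2U x * σ2V y)^2)) (σ2U x * σ2V y)) :=
      DVC.csmatW_eq (fun x y => Real.sqrt (1 - (σ2U x * σ2V y)^2))
        (fun x y => σ2U x * σ2V y)
    rw [DVC.valley_eq, e1, e2, e3, DVC.Lhat_conj, DVC.ctrlOn_eq, DVC.ctrlOn_eq, e4,
      DVC.tfF_mul, DVC.tfF_mul]
    refine congrArg DVC.tfF (funext fun x => funext fun y => ?_)
    rw [show L x y = DVC.Lab (α x y) (β x y) from hLab x y]
    exact DVC.key (σ1U x) (σ2U x) (σ1V y) (σ2V y)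
      (Real.sqrt (1 - (σ2U x * σ2V y)^2)) (α x y) (β x y)
      (h1 x y) (h2 x y) (h3 x y) (hUs x)
end
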